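/- Let F be a perfect field of characteristic p > 0, let t be an indeterminate, and let L be a finite extension of F(t) with degree of inseparability p^i. Then L = K·M (compositum), where K = F(t^{p^{-i}}) and M is the maximal subfield of L separable over F(t); in particular, L/K is separable. -/

import Mathlib

/-!
Write `q = p ^ i` and `E = F(t)`. As `L / M` is purely inseparable of degree `q`, `L ^ q ⊆ M`.
Frobenius identifies `L / E` with `L ^ q / E ^ q`, so `[L : L ^ q] = [E : E ^ q]`, and the latter
is `[F(t) : F(t ^ q)] = q` because `F` is perfect; hence `M = L ^ q` and `t = s ^ q` for some
`s ∈ L`. Then `x ↦ x ^ q` maps `L` onto `M` and `K = E(s)` onto a field containing `E` (again as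
`F` is perfect), so `L / K` inherits separability from `M / E`. Finally `L` is both separable and
purely inseparable over `K ⊔ M`.
-/

open IntermediateField

namespace RatFunc

variable {F : Type*} [Field F]

theorem subfield_eq_top {T : Subfield (RatFunc F)} (hC : ∀ c, C c ∈ T) (hX : X ∈ T) :
    T = ⊤ := by
  refine top_le_iff.mp ?_
  rw [← IntermediateField.top_toSubfield (F := F), ← adjoin_X]
  refine adjoin_le_subfield F {X} ?_ (by simpa using hX)
  rintro _ ⟨c, rfl⟩
  exact hC c

variable (F) (p n : ℕ) [ExpChar F p] [PerfectField F]

theorem C_mem_fieldRange_iterateFrobenius (c : F) :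
    C c ∈ (iterateFrobenius (RatFunc F) p n).fieldRange :=
  ⟨C ((iterateFrobeniusEquiv F p n).symm c), by
    rw [iterateFrobenius_def, ← map_pow, ← iterateFrobeniusEquiv_def,
      RingEquiv.apply_symm_apply]⟩

theorem fieldRange_iterateFrobenius :
    (iterateFrobenius (RatFunc F) p n).fieldRange =
      (F⟮(X : RatFunc F) ^ p ^ n⟯).toSubfield := by
  apply le_antisymm
  · rw [RingHom.fieldRange_eq_map, Subfield.map_le_iff_le_comap, top_le_iff]
    refine subfield_eq_top (fun c => ?_) ?_
    · simp only [Subfield.mem_comap, iterateFrobenius_def, ← map_pow]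
      exact IntermediateField.algebraMap_mem (F⟮(X : RatFunc F) ^ p ^ n⟯) (c ^ p ^ n)
    · simp only [Subfield.mem_comap, iterateFrobenius_def]
      exact mem_adjoin_simple_self F _
  · refine adjoin_le_subfield F _ ?_ ?_
    · rintro _ ⟨c, rfl⟩
      rw [algebraMap_eq_C]
      exact C_mem_fieldRange_iterateFrobenius F p n c
    · simp only [Set.singleton_subset_iff, SetLike.mem_coe]
      exact ⟨X, iterateFrobenius_def _ _ _⟩

theorem relfinrank_fieldRange_iterateFrobenius :
    (iterateFrobenius (RatFunc F) p n).fieldRange.relfinrank ⊤ = p ^ n := by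
  rw [fieldRange_iterateFrobenius, ← IntermediateField.top_toSubfield (F := F),
    ← IntermediateField.relfinrank, IntermediateField.relfinrank_top_right,
    finrank_eq_max_natDegree, ← algebraMap_X, ← map_pow, num_algebraMap, denom_algebraMap]
  simp

end RatFunc

theorem Subfield.relfinrank_fieldRange_top_eq_relfinrank_map {L : Type*} [Field L] (φ : L →+* L)
    {E : Subfield L} (hE : E.map φ ≤ E) (hfin : E.relfinrank ⊤ ≠ 0) :
    φ.fieldRange.relfinrank ⊤ = (E.map φ).relfinrank E := by
  rw [RingHom.fieldRange_eq_map]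
  have h := relfinrank_mul_relfinrank ((gc_map_comap φ).monotone_l (le_top : E ≤ ⊤)) le_top
  rw [← relfinrank_mul_relfinrank hE le_top, relfinrank_map_map, mul_comm] at h
  exact Nat.eq_of_mul_eq_mul_right (Nat.pos_of_ne_zero hfin) h

theorem Subfield.isSeparable_of_fieldRange_le {K L : Type*} [Field K] [Field L] [Algebra K L]
    {B : Subfield L} (hB : (algebraMap K L).fieldRange ≤ B) {x : L} (h : IsSeparable K x) :
    IsSeparable B x :=
  have : IsSeparable (B.toIntermediateField fun a => hB ⟨a, rfl⟩) x := h.tower_top _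
  this

theorem Subfield.isSeparable_of_isSeparable_map {L L' : Type*} [Field L] [Field L']
    (φ : L →+* L') (A : Subfield L) {x : L} (h : IsSeparable (A.map φ) (φ x)) :
    IsSeparable A x := by
  let e : A ≃+* A.map φ := A.equivMapOfInjective φ φ.injective
  set g := minpoly (A.map φ) (φ x)
  have hg : Polynomial.aeval x (g.map e.symm.toRingHom) = 0 := by
    apply φ.injective
    rw [map_zero, Polynomial.aeval_def, Polynomial.hom_eval₂, Polynomial.eval₂_map]
    convert minpoly.aeval (A.map φ) (φ x)
    rw [Polynomial.aeval_def]
    congr 1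
    ext a
    exact congrArg Subtype.val (e.apply_symm_apply a)
  exact (Polynomial.Separable.map h).of_dvd (minpoly.dvd A x hg)

theorem IsPurelyInseparable.pow_mem_of_finrank_le {K L : Type*} [Field K] [Field L] [Algebra K L]
    [IsPurelyInseparable K L] [FiniteDimensional K L] (p : ℕ) [ExpChar K p] {n : ℕ}
    (hn : Module.finrank K L ≤ p ^ n) (a : L) : a ^ p ^ n ∈ (algebraMap K L).range := by
  rcases expChar_is_prime_or_one K p with hp | rfl
  · have he : elemExponent K a ≤ n := (Nat.pow_le_pow_iff_right hp.one_lt).mp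
      ((minpoly_natDegree_eq' K p a).symm.le.trans ((minpoly.natDegree_le a).trans hn))
    rw [← Nat.add_sub_cancel' he, pow_add, pow_mul]
    exact _root_.pow_mem (elemExponent_def' K p a) _
  · simpa using elemExponent_def' K 1 a

theorem IntermediateField.sup_eq_top_of_isSeparable_of_isPurelyInseparable {F L : Type*} [Field F]
    [Field L] [Algebra F L] (K M : IntermediateField F L) [Algebra.IsSeparable K L]
    [IsPurelyInseparable M L] : K ⊔ M = ⊤ := by
  let : Algebra M ↥(K ⊔ M) := (inclusion le_sup_right).toAlgebra
  have : IsScalarTower M ↥(K ⊔ M) L := IsScalarTower.of_algebraMap_eq' rfl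
  let : Algebra K ↥(K ⊔ M) := (inclusion le_sup_left).toAlgebra
  have : IsScalarTower K ↥(K ⊔ M) L := IsScalarTower.of_algebraMap_eq' rfl
  have := IsPurelyInseparable.tower_top M ↥(K ⊔ M) L
  have := Algebra.isSeparable_tower_top_of_isSeparable K ↥(K ⊔ M) L
  refine eq_top_iff.mpr fun x _ => ?_
  obtain ⟨y, rfl⟩ := IsPurelyInseparable.surjective_algebraMap_of_isSeparable ↥(K ⊔ M) L x
  exact y.2

section FiniteExtension

variable {F : Type*} [Field F] [PerfectField F] (p n : ℕ) [ExpChar F p]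
  {L : Type*} [Field L] [Algebra (RatFunc F) L] [ExpChar L p]

theorem RatFunc.relfinrank_fieldRange_iterateFrobenius_of_finiteDimensional
    [FiniteDimensional (RatFunc F) L] :
    (iterateFrobenius L p n).fieldRange.relfinrank ⊤ = p ^ n := by
  set ι := algebraMap (RatFunc F) L
  have hE : ι.fieldRange.map (iterateFrobenius L p n) =
      (iterateFrobenius (RatFunc F) p n).fieldRange.map ι := by
    simp only [RingHom.fieldRange_eq_map, Subfield.map_map, RingHom.iterateFrobenius_comm]
  rw [Subfield.relfinrank_fieldRange_top_eq_relfinrank_map _ (E := ι.fieldRange), hE,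
    RingHom.fieldRange_eq_map ι, Subfield.relfinrank_map_map,
    RatFunc.relfinrank_fieldRange_iterateFrobenius]
  · rw [hE, RingHom.fieldRange_eq_map ι]
    exact (Subfield.gc_map_comap ι).monotone_l le_top
  · rw [← bot_toSubfield, ← top_toSubfield (F := RatFunc F), ← IntermediateField.relfinrank,
      relfinrank_bot_left, finrank_top']
    exact Module.finrank_pos.ne'

theorem RatFunc.separableClosure_toSubfield_eq_fieldRange_iterateFrobenius
    [FiniteDimensional (RatFunc F) L] (hinsep : Field.finInsepDegree (RatFunc F) L = p ^ n) :
    (separableClosure (RatFunc F) L).toSubfield = (iterateFrobenius L p n).fieldRange := by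
  set M := separableClosure (RatFunc F) L
  have hle : (iterateFrobenius L p n).fieldRange ≤ M.toSubfield := by
    rintro _ ⟨x, rfl⟩
    obtain ⟨y, hy⟩ := IsPurelyInseparable.pow_mem_of_finrank_le (K := M) p hinsep.le x
    rw [iterateFrobenius_def, ← hy]
    exact y.2
  refine le_antisymm ?_ hle
  rw [← Subfield.relfinrank_eq_one_iff]
  have h := Subfield.relfinrank_mul_relfinrank hle le_top
  have hdeg : Module.finrank M.toSubfield L = p ^ n := hinsep
  rw [relfinrank_fieldRange_iterateFrobenius_of_finiteDimensional (F := F),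
    Subfield.relfinrank_top_right, hdeg] at h
  exact Nat.eq_of_mul_eq_mul_right (pow_pos (expChar_pos L p) n) (h.trans (one_mul _).symm)

theorem RatFunc.fieldRange_algebraMap_le_map_iterateFrobenius
    {K : IntermediateField (RatFunc F) L} {s : L} (hsK : s ∈ K)
    (hs : s ^ p ^ n = algebraMap (RatFunc F) L X) :
    (algebraMap (RatFunc F) L).fieldRange ≤ K.toSubfield.map (iterateFrobenius L p n) := by
  rw [RingHom.fieldRange_eq_map, Subfield.map_le_iff_le_comap, top_le_iff]
  refine RatFunc.subfield_eq_top (fun c => ?_) ⟨s, hsK, hs⟩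
  obtain ⟨r, hr⟩ := RatFunc.C_mem_fieldRange_iterateFrobenius F p n c
  refine ⟨algebraMap _ L r, K.algebraMap_mem r, ?_⟩
  rw [← hr]
  exact (RingHom.map_iterateFrobenius _ p r n).symm

end FiniteExtension

/-- **Cohen–Odoni, Lemma 1.1.** Let `F` be a perfect field of characteristic `p ≠ 0` and let
`L` be a finite extension of `F(t)` with degree of inseparability `p^i`. Then `L = K·M`, where
`K = F(t^{p^{-i}})` (i.e. `K` is obtained by adjoining a `p^i`-th root `s` of `t` inside `L`)
and `M` is the maximal subfield of `L` separable over `F(t)`; in particular `L/K` is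
separable. -/
theorem reduce_to_separable (F : Type*) [Field F] [PerfectField F] (p : ℕ) (hp : p.Prime)
    [CharP F p] (L : Type*) [Field L] [Algebra (RatFunc F) L]
    [FiniteDimensional (RatFunc F) L] (i : ℕ)
    (hinsep : Field.finInsepDegree (RatFunc F) L = p ^ i) :
    ∃ s : L, s ^ p ^ i = algebraMap (RatFunc F) L RatFunc.X ∧
      IntermediateField.adjoin (RatFunc F) {s} ⊔ separableClosure (RatFunc F) L = ⊤ ∧
      Algebra.IsSeparable (IntermediateField.adjoin (RatFunc F) {s}) L := by
  have : ExpChar F p := .prime hp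
  have : ExpChar L p := ExpChar.of_injective_algebraMap' (RatFunc F) p
  set φ := iterateFrobenius L p i
  have hM := RatFunc.separableClosure_toSubfield_eq_fieldRange_iterateFrobenius p i hinsep
  obtain ⟨s, hs⟩ : algebraMap (RatFunc F) L RatFunc.X ∈ φ.fieldRange :=
    hM ▸ (separableClosure (RatFunc F) L).algebraMap_mem RatFunc.X
  refine ⟨s, hs, ?_⟩
  set K := adjoin (RatFunc F) {s}
  have hK := RatFunc.fieldRange_algebraMap_le_map_iterateFrobenius p i
    (mem_adjoin_simple_self (RatFunc F) s) hs
  have : Algebra.IsSeparable K L := ⟨fun x =>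
    Subfield.isSeparable_of_isSeparable_map φ K.toSubfield <|
      Subfield.isSeparable_of_fieldRange_le hK <| hM.ge ⟨x, rfl⟩⟩
  exact ⟨sup_eq_top_of_isSeparable_of_isPurelyInseparable K _, this⟩
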